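/- Recovering a discrete measure from its expected signature: let X_1,...,X_n be paths of finite variation with pairwise distinct signatures, and let X be a random path taking value X_i with probability λ_i (λ_i ≥ 0, Σλ_i = 1). Then for each i there is a linear form σ_i on T((ℝ^d)) with λ_i = σ_i(E[S(X)]), where E[S(X)] = Σ_{i=1}^n λ_i S(X_i). -/

import Mathlib

open MeasureTheory Set

/-- Iterated integral of a path against its derivative; the head letter is integrated
outermost (so this corresponds to the reversed word). -/
noncomputable def iterInt {d : ℕ} (X : ℝ → Fin d → ℝ) (a : ℝ) : List (Fin d) → ℝ → ℝ
  | [], _ => 1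
  | i :: I, b => ∫ u in a..b, iterInt X a I u * deriv (fun s => X s i) u

/-- Coordinate iterated integral `π^I(S(X))` over `[a,b]` for the word `I = (i₁,…,iₙ)`
(innermost integration first). -/
noncomputable def sigCoord {d : ℕ} (X : ℝ → Fin d → ℝ) (a b : ℝ) (I : List (Fin d)) : ℝ :=
  iterInt X a I.reverse b

/-- The signature of a path over `[a,b]`, as the family of its coordinate iterated
integrals indexed by words; this represents an element of the tensor algebra `T((ℝ^d))`. -/
noncomputable def Sig {d : ℕ} (X : ℝ → Fin d → ℝ) (a b : ℝ) : List (Fin d) → ℝ :=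
  fun I => sigCoord X a b I

/-- The product of the tensor algebra `T((ℝ^d))` in coordinates. -/
noncomputable def tmul {d : ℕ} (x y : List (Fin d) → ℝ) : List (Fin d) → ℝ :=
  fun w => ∑ k ∈ Finset.range (w.length + 1), x (w.take k) * y (w.drop k)

/-- The unit of the tensor algebra. -/
def tunit {d : ℕ} : List (Fin d) → ℝ := fun w => if w = [] then 1 else 0

/-- The tensor exponential `exp(v) = Σ v^{⊗n}/n!` in coordinates. -/
noncomputable def texp {d : ℕ} (v : Fin d → ℝ) : List (Fin d) → ℝ :=
  fun w => (w.map v).prod / w.length.factorial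

/-- The multiset of shuffles of two words. -/
def shuffles {α : Type*} : List α → List α → Multiset (List α)
  | [], v => {v}
  | u, [] => {u}
  | a :: u, b :: v => ((shuffles u (b :: v)).map (a :: ·)) + ((shuffles (a :: u) v).map (b :: ·))
  termination_by u v => u.length + v.length

/-- `x` is in the range of the signature map on continuous bounded-variation paths. -/
def IsSignature {d : ℕ} (x : List (Fin d) → ℝ) : Prop :=
  ∃ (X : ℝ → Fin d → ℝ) (a b : ℝ), a ≤ b ∧ ContinuousOn X (Set.Icc a b) ∧
    BoundedVariationOn X (Set.Icc a b) ∧ x = Sig X a b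

/-- Evaluation of a (finitely supported) linear form on `T((ℝ^d))`. -/
noncomputable def formEval {d : ℕ} (f : List (Fin d) →₀ ℝ) (x : List (Fin d) → ℝ) : ℝ :=
  f.sum fun w c => c * x w

/-- The shuffle product of two linear forms, extended bilinearly from words. -/
noncomputable def shuffleForm {d : ℕ} (f g : List (Fin d) →₀ ℝ) : List (Fin d) →₀ ℝ :=
  f.sum fun u cu => g.sum fun v cv =>
    (cu * cv) • ((shuffles u v).map fun w => Finsupp.single w (1 : ℝ)).sum

/-! By the shuffle identity `⟨S, u⟩ ⟨S, w⟩ = ∑_{z ∈ u ⧢ w} ⟨S, z⟩`, proved by induction on words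
with integration by parts for the (absolutely continuous) iterated integrals, a product of
signature coordinates is a sum of coordinates over a multiset of words that does not depend on the
path. So a linear relation among the signatures `S(X_j)` is also a relation among the characters
`l ↦ ∏_{w ∈ l} ⟨S(X_j), w⟩` of the free monoid on words, and Dedekind's lemma forces it to be
trivial because the signatures are distinct. The signatures being linearly independent, a dual
family `σ_i` exists, and then `σ_i (∑ λ_j S(X_j)) = λ_i`. -/

theorem intervalIntegral.integral_mul_integral {f g : ℝ → ℝ} {a b : ℝ}
    (hf : IntervalIntegrable f volume a b) (hg : IntervalIntegrable g volume a b) :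
    (∫ s in a..b, f s) * (∫ s in a..b, g s) =
      ∫ t in a..b, f t * (∫ s in a..t, g s) + (∫ s in a..t, f s) * g t := by
  have hF := hf.absolutelyContinuousOnInterval_intervalIntegral left_mem_uIcc
  have hG := hg.absolutelyContinuousOnInterval_intervalIntegral left_mem_uIcc
  have h := hF.integral_deriv_mul_eq_sub hG
  simp only [intervalIntegral.integral_same, zero_mul, sub_zero] at h
  rw [← h]
  refine intervalIntegral.integral_congr_ae ?_
  filter_upwards [hf.ae_hasDerivAt_integral, hg.ae_hasDerivAt_integral] with t hft hgt ht
  have ht' := uIoc_subset_uIcc ht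
  rw [(hft ht' a left_mem_uIcc).deriv, (hgt ht' a left_mem_uIcc).deriv]

section IterInt

variable {d : ℕ} {Y : ℝ → Fin d → ℝ} {a b : ℝ}

theorem continuousOn_iterInt
    (hY : ∀ k, IntervalIntegrable (deriv fun s => Y s k) volume a b) :
    ∀ I : List (Fin d), ContinuousOn (iterInt Y a I) (uIcc a b)
  | [] => continuousOn_const
  | k :: I => intervalIntegral.continuousOn_primitive_interval'
      ((hY k).continuousOn_mul (continuousOn_iterInt hY I)) left_mem_uIcc

theorem intervalIntegrable_iterInt_mul_deriv
    (hY : ∀ k, IntervalIntegrable (deriv fun s => Y s k) volume a b)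
    (k : Fin d) (w : List (Fin d)) {c : ℝ} (hc : c ∈ uIcc a b) :
    IntervalIntegrable (fun t => iterInt Y a w t * deriv (fun s => Y s k) t) volume a c :=
  ((hY k).continuousOn_mul (continuousOn_iterInt hY w)).mono_set
    (uIcc_subset_uIcc left_mem_uIcc hc)

theorem intervalIntegrable_sum_iterInt_mul_deriv
    (hY : ∀ k, IntervalIntegrable (deriv fun s => Y s k) volume a b)
    (k : Fin d) (m : Multiset (List (Fin d))) {c : ℝ} (hc : c ∈ uIcc a b) :
    IntervalIntegrable
      (fun t => (m.map fun w => iterInt Y a w t).sum * deriv (fun s => Y s k) t) volume a c :=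
  ((hY k).continuousOn_mul (continuousOn_multiset_sum m fun w _ => continuousOn_iterInt hY w))
    |>.mono_set (uIcc_subset_uIcc left_mem_uIcc hc)

theorem integral_sum_iterInt_mul_deriv
    (hY : ∀ k, IntervalIntegrable (deriv fun s => Y s k) volume a b)
    (k : Fin d) (m : Multiset (List (Fin d))) {c : ℝ} (hc : c ∈ uIcc a b) :
    ∫ t in a..c, (m.map fun w => iterInt Y a w t).sum * deriv (fun s => Y s k) t =
      (m.map fun w => iterInt Y a (k :: w) c).sum := by
  induction m using Multiset.induction_on with
  | empty => simp
  | cons w m ih =>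
    simp only [Multiset.map_cons, Multiset.sum_cons, add_mul]
    rw [intervalIntegral.integral_add (intervalIntegrable_iterInt_mul_deriv hY k w hc)
      (intervalIntegrable_sum_iterInt_mul_deriv hY k m hc), ih]
    rfl

theorem iterInt_mul_iterInt
    (hY : ∀ k, IntervalIntegrable (deriv fun s => Y s k) volume a b) :
    ∀ (u v : List (Fin d)), ∀ c ∈ uIcc a b,
      iterInt Y a u c * iterInt Y a v c = ((shuffles u v).map fun w => iterInt Y a w c).sum
  | [], v, c, _ => by simp [iterInt, shuffles]
  | i :: u, [], c, _ => by simp [iterInt, shuffles]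
  | i :: u, j :: v, c, hc => by
    have hsub : uIcc a c ⊆ uIcc a b := uIcc_subset_uIcc left_mem_uIcc hc
    calc iterInt Y a (i :: u) c * iterInt Y a (j :: v) c
        = ∫ t in a..c, iterInt Y a u t * deriv (fun s => Y s i) t * iterInt Y a (j :: v) t
            + iterInt Y a (i :: u) t * (iterInt Y a v t * deriv (fun s => Y s j) t) :=
          intervalIntegral.integral_mul_integral
            (intervalIntegrable_iterInt_mul_deriv hY i u hc)
            (intervalIntegrable_iterInt_mul_deriv hY j v hc)
      _ = ∫ t in a..c, ((shuffles u (j :: v)).map fun w => iterInt Y a w t).sum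
              * deriv (fun s => Y s i) t
            + ((shuffles (i :: u) v).map fun w => iterInt Y a w t).sum
              * deriv (fun s => Y s j) t := by
          refine intervalIntegral.integral_congr fun t ht => ?_
          rw [← iterInt_mul_iterInt hY u (j :: v) t (hsub ht),
            ← iterInt_mul_iterInt hY (i :: u) v t (hsub ht)]
          ring
      _ = ((shuffles (i :: u) (j :: v)).map fun w => iterInt Y a w c).sum := by
          rw [intervalIntegral.integral_add (intervalIntegrable_sum_iterInt_mul_deriv hY i _ hc)
            (intervalIntegrable_sum_iterInt_mul_deriv hY j _ hc),
            integral_sum_iterInt_mul_deriv hY i _ hc, integral_sum_iterInt_mul_deriv hY j _ hc,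
            shuffles, Multiset.map_add, Multiset.sum_add, Multiset.map_map, Multiset.map_map]
          rfl
  termination_by u v => u.length + v.length

end IterInt

theorem LinearIndependent.exists_linearMap_apply_eq_ite {ι K V : Type*} [Field K]
    [AddCommGroup V] [Module K V] [DecidableEq ι] {v : ι → V} (hv : LinearIndependent K v)
    (i : ι) : ∃ L : V →ₗ[K] K, ∀ j, L (v j) = if i = j then 1 else 0 := by
  obtain ⟨L, hL⟩ := LinearMap.exists_extend ((Finsupp.lapply i).comp hv.repr)
  refine ⟨L, fun j => ?_⟩
  have hj := LinearMap.congr_fun hL ⟨v j, Submodule.subset_span (Set.mem_range_self j)⟩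
  simp only [LinearMap.comp_apply, Submodule.subtype_apply, Finsupp.lapply_apply] at hj
  rw [hj, hv.repr_eq_single j _ rfl]
  simp only [Finsupp.single_apply, eq_comm]

theorem linearIndependent_of_mul_eq_multiset_sum {ι W K : Type*} [Field K] {S : ι → W → K}
    (hS : Function.Injective S) (e : W) (hone : ∀ j, S j e = 1)
    (hmul : ∀ u w, ∃ M : Multiset W, ∀ j, S j u * S j w = (M.map (S j)).sum) :
    LinearIndependent K S := by
  have hprod : ∀ l : List W, ∃ M : Multiset W, ∀ j, (l.map (S j)).prod = (M.map (S j)).sum := by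
    intro l
    induction l with
    | nil => exact ⟨{e}, by simp [hone]⟩
    | cons w l ih =>
      obtain ⟨M, hM⟩ := ih
      choose N hN using hmul w
      refine ⟨M.bind N, fun j => ?_⟩
      rw [List.map_cons, List.prod_cons, hM, ← Multiset.sum_map_mul_left, Multiset.map_bind,
        Multiset.sum_bind]
      simp only [hN]
  choose M hM using hprod
  let Φ : (W → K) →ₗ[K] FreeMonoid W → K :=
    { toFun := fun f l => ((M l.toList).map f).sum
      map_add' := fun f g => by ext l; simp [Multiset.sum_map_add]
      map_smul' := fun c f => by ext l; simp [Multiset.sum_map_mul_left] }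
  let χ : ι → FreeMonoid W →* K := fun j => FreeMonoid.lift (S j)
  have hχ : Function.Injective χ := fun i j hij => hS <| funext fun w => by
    simpa [χ] using DFunLike.congr_fun hij (FreeMonoid.of w)
  have hΦ : Φ ∘ S = fun j => ⇑(χ j) := by
    ext j l
    simp [Φ, χ, FreeMonoid.lift_apply, hM]
  exact .of_comp Φ (hΦ ▸ (linearIndependent_monoidHom (FreeMonoid W) K).comp χ hχ)

theorem sig_nil {d : ℕ} (X : ℝ → Fin d → ℝ) (a b : ℝ) : Sig X a b [] = 1 := rfl

theorem sig_mul_sig {d : ℕ} {X : ℝ → Fin d → ℝ} {a b : ℝ} (hab : a ≤ b)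
    (hX : BoundedVariationOn X (Icc a b)) (u w : List (Fin d)) :
    Sig X a b u * Sig X a b w =
      (((shuffles u.reverse w.reverse).map List.reverse).map (Sig X a b)).sum := by
  have hY : ∀ k, IntervalIntegrable (deriv fun s => X s k) volume a b := fun k =>
    BoundedVariationOn.intervalIntegrable_deriv <| by
      rw [uIcc_of_le hab]
      exact (LipschitzWith.eval k).comp_boundedVariationOn hX
  simpa only [Sig, sigCoord, Multiset.map_map, Function.comp_def, List.reverse_reverse]
    using iterInt_mul_iterInt hY u.reverse w.reverse b right_mem_uIcc

theorem linearIndependent_sig {d : ℕ} {ι : Type*} {X : ι → ℝ → Fin d → ℝ} {a b : ι → ℝ}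
    (hab : ∀ j, a j ≤ b j) (hX : ∀ j, BoundedVariationOn (X j) (Icc (a j) (b j)))
    (hinj : Function.Injective fun j => Sig (X j) (a j) (b j)) :
    LinearIndependent ℝ fun j => Sig (X j) (a j) (b j) :=
  linearIndependent_of_mul_eq_multiset_sum hinj [] (fun _ => sig_nil _ _ _)
    fun u w => ⟨_, fun j => sig_mul_sig (hab j) (hX j) u w⟩

theorem recover_discrete_measure_general {d n : ℕ} (X : Fin n → ℝ → Fin d → ℝ) (a b : Fin n → ℝ)
    (hab : ∀ i, a i ≤ b i)
    (hv : ∀ i, BoundedVariationOn (X i) (Set.Icc (a i) (b i)))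
    (hdist : ∀ i j, i ≠ j → Sig (X i) (a i) (b i) ≠ Sig (X j) (a j) (b j))
    (lam : Fin n → ℝ) :
    ∀ i, ∃ L : (List (Fin d) → ℝ) →ₗ[ℝ] ℝ,
      (∀ j, L (Sig (X j) (a j) (b j)) = if i = j then 1 else 0) ∧
      lam i = L (∑ j, lam j • Sig (X j) (a j) (b j)) := by
  intro i
  have hind := linearIndependent_sig hab hv fun j k => not_imp_not.1 (hdist j k)
  obtain ⟨L, hL⟩ := hind.exists_linearMap_apply_eq_ite i
  refine ⟨L, hL, ?_⟩
  simp [hL]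

/-- a discrete measure on paths with pairwise distinct signatures can be
recovered from its expected signature via separating linear forms. -/
theorem recover_discrete_measure {d n : ℕ} (X : Fin n → ℝ → Fin d → ℝ) (a b : Fin n → ℝ)
    (hab : ∀ i, a i ≤ b i)
    (hc : ∀ i, ContinuousOn (X i) (Set.Icc (a i) (b i)))
    (hv : ∀ i, BoundedVariationOn (X i) (Set.Icc (a i) (b i)))
    (hdist : ∀ i j, i ≠ j → Sig (X i) (a i) (b i) ≠ Sig (X j) (a j) (b j))
    (lam : Fin n → ℝ) (hnn : ∀ i, 0 ≤ lam i) (hsum : ∑ i, lam i = 1) :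
    ∀ i, ∃ L : (List (Fin d) → ℝ) →ₗ[ℝ] ℝ,
      (∀ j, L (Sig (X j) (a j) (b j)) = if i = j then 1 else 0) ∧
      lam i = L (∑ j, lam j • Sig (X j) (a j) (b j)) :=
  recover_discrete_measure_general X a b hab hv hdist lam
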